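/- (Harmonic lifting estimates.) Let h > 0 and let ψ ∈ L²(T^d). Define ψ̲(x,z) for z ∈ [−h,0] via its Fourier coefficients by 𝓕ψ̲(ξ,z) = [e^{z|ξ|}/(1+e^{−2h|ξ|})] ψ̂(ξ) + [e^{−2h|ξ|−z|ξ|}/(1+e^{−2h|ξ|})] ψ̂(ξ), so that ∂_z²ψ̲ + Δ_x ψ̲ = 0, ψ̲|_{z=0} = ψ, ∂_zψ̲|_{z=−h} = 0. Then for every μ ∈ R there exists C > 0 such that for all σ ≥ 0 with a(D_x)^{1/2}ψ ∈ H^{σ,μ}: ‖∇_{x,z}ψ̲‖_{L²((−h,0), H^{σ,μ})} ≤ C ‖a(D_x)^{1/2}ψ‖_{H^{σ,μ}} and ‖∇_{x,z}ψ̲‖_{L^∞((−h,0), H^{σ,μ−1/2})} ≤ C ‖a(D_x)^{1/2}ψ‖_{H^{σ,μ}}. -/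

import Mathlib

open scoped ENNReal BigOperators

/-- Euclidean norm of a lattice point `ξ ∈ ℤ^d`. -/
noncomputable def latNorm {d : ℕ} (ξ : Fin d → ℤ) : ℝ :=
  Real.sqrt (∑ i, ((ξ i : ℝ)) ^ 2)

/-- Japanese bracket `⟨ξ⟩ = (1+|ξ|²)^{1/2}`. -/
noncomputable def latJap {d : ℕ} (ξ : Fin d → ℤ) : ℝ :=
  Real.sqrt (1 + ∑ i, ((ξ i : ℝ)) ^ 2)

/-- Weight `e^{2σ|ξ|}⟨ξ⟩^{2s}` of the analytic Sobolev space `H^{σ,s}(T^d)`. -/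
noncomputable def hWeight {d : ℕ} (σ s : ℝ) (ξ : Fin d → ℤ) : ℝ≥0∞ :=
  ENNReal.ofReal (Real.exp (2 * σ * latNorm ξ) * (latJap ξ) ^ (2 * s))

/-- Squared `H^{σ,s}(T^d)` norm of a function given by its Fourier
coefficients `c : ℤ^d → ℂ`. -/
noncomputable def hNormSq {d : ℕ} (σ s : ℝ) (c : (Fin d → ℤ) → ℂ) : ℝ≥0∞ :=
  ∑' ξ, hWeight σ s ξ * (‖c ξ‖₊ : ℝ≥0∞) ^ 2

/-- `H^{σ,s}(T^d)` norm. -/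
noncomputable def hNorm {d : ℕ} (σ s : ℝ) (c : (Fin d → ℤ) → ℂ) : ℝ≥0∞ :=
  (hNormSq σ s c) ^ (1/2 : ℝ)

/-- Convolution of Fourier coefficients: this represents the pointwise
product of the corresponding functions on `T^d` (up to the fixed
normalization factor `(2π)^{-d}`, harmless for the estimates below). -/
noncomputable def conv {d : ℕ} (f g : (Fin d → ℤ) → ℂ) : (Fin d → ℤ) → ℂ :=
  fun ξ => ∑' ζ, f (ξ - ζ) * g ζ

open MeasureTheory

/-- Multiplier of the harmonic lifting:
`𝓕ψ̲(ξ,z) = liftP h ξ z ψ̂(ξ)`. -/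
noncomputable def liftP {d : ℕ} (h : ℝ) (ξ : Fin d → ℤ) (z : ℝ) : ℝ :=
  (Real.exp (z * latNorm ξ) + Real.exp (-(2 * h + z) * latNorm ξ)) /
    (1 + Real.exp (-2 * h * latNorm ξ))

/-- Multiplier of `∂_zψ̲/|ξ|`:
`𝓕(∂_zψ̲)(ξ,z) = |ξ| liftQ h ξ z ψ̂(ξ)`. -/
noncomputable def liftQ {d : ℕ} (h : ℝ) (ξ : Fin d → ℤ) (z : ℝ) : ℝ :=
  (Real.exp (z * latNorm ξ) - Real.exp (-(2 * h + z) * latNorm ξ)) /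
    (1 + Real.exp (-2 * h * latNorm ξ))

/-- Squared `H^{σ,μ}` norm of `∇_{x,z}ψ̲(·,z)`:
`|𝓕(∇_xψ̲)(ξ,z)|² + |𝓕(∂_zψ̲)(ξ,z)|² = |ξ|²(P² + Q²)|ψ̂(ξ)|²`. -/
noncomputable def liftGradSq {d : ℕ} (h σ μ : ℝ) (c : (Fin d → ℤ) → ℂ) (z : ℝ) : ℝ≥0∞ :=
  ∑' ξ : Fin d → ℤ, hWeight σ μ ξ *
    ENNReal.ofReal ((latNorm ξ) ^ 2 * ((liftP h ξ z) ^ 2 + (liftQ h ξ z) ^ 2)) *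
    (‖c ξ‖₊ : ℝ≥0∞) ^ 2

/-- Fourier coefficients of `a(D_x)^{1/2}ψ`, where `a(ξ) = |ξ| tanh(h|ξ|)`. -/
noncomputable def aHalf {d : ℕ} (h : ℝ) (c : (Fin d → ℤ) → ℂ) :
    (Fin d → ℤ) → ℂ :=
  fun ξ => (Real.sqrt (latNorm ξ * Real.tanh (h * latNorm ξ)) : ℂ) * c ξ

/-
Each Fourier mode of the lifting is explicit: `liftP = cosh((z+h)|ξ|)/cosh(h|ξ|)` and
`liftQ = sinh((z+h)|ξ|)/cosh(h|ξ|)`, with `∂_z liftP = |ξ| liftQ` and `∂_z liftQ = |ξ| liftP`.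
Green's identity `∂_z(|ξ| liftP liftQ) = |ξ|²(liftP² + liftQ²)` integrates over `(-h, 0)` to
`|ξ| tanh(h|ξ|) = a(ξ)`, because `liftQ(-h) = 0`, `liftP(0) = 1` and `liftQ(0) = tanh(h|ξ|)`; so the
`L²` estimate even holds with equality. For the `L^∞` estimate, `liftQ² ≤ liftP² ≤ 1` on `[-h, 0]`,
and `x ≤ (1 + 2x) tanh x` gives `h|ξ| ≤ (1 + 2h) ⟨ξ⟩ tanh(h|ξ|)`: the loss of `⟨ξ⟩^{1/2}` pays
for the gap between `|ξ|²` and `a(ξ)`.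
-/

open Real Set

namespace Real

lemma tanh_nonneg {x : ℝ} (hx : 0 ≤ x) : 0 ≤ tanh x := by
  rw [tanh_eq_sinh_div_cosh]
  exact div_nonneg (sinh_nonneg_iff.2 hx) (cosh_pos x).le

lemma le_one_add_two_mul_mul_tanh {x : ℝ} (hx : 0 ≤ x) : x ≤ (1 + 2 * x) * tanh x := by
  have hvw : exp x * exp (-x) = 1 := by rw [← exp_add, add_neg_cancel, exp_zero]
  have hv2 : 1 + 2 * x ≤ exp x ^ 2 := by
    rw [← exp_nat_mul]; push_cast; linarith [add_one_le_exp (2 * x)]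
  have hcross : (1 + 3 * x) * exp (-x) ≤ (1 + x) * exp x := by
    nlinarith [mul_le_mul_of_nonneg_left hv2 (by linarith : (0:ℝ) ≤ 1 + x), exp_pos x]
  rw [tanh_eq, mul_div_assoc', le_div_iff₀ (by positivity)]
  nlinarith

lemma one_add_exp_neg_two_mul (x : ℝ) :
    1 + exp (-2 * x) = exp (-x) * (exp x + exp (-x)) := by
  rw [mul_add, ← exp_add, ← exp_add, neg_add_cancel, exp_zero, add_comm]; ring_nf

end Real

theorem setLIntegral_Ioo_ofReal_eq_sub_of_hasDerivAt {f f' : ℝ → ℝ} {a b : ℝ} (hab : a ≤ b)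
    (hf : ∀ x, HasDerivAt f (f' x) x) (hf' : Continuous f') (hpos : ∀ x ∈ Ioo a b, 0 ≤ f' x) :
    ∫⁻ x in Ioo a b, ENNReal.ofReal (f' x) = ENNReal.ofReal (f b - f a) := by
  rw [← ofReal_integral_eq_lintegral_ofReal (hf'.integrableOn_Icc.mono_set Ioo_subset_Icc_self)
    ((ae_restrict_iff' measurableSet_Ioo).2 (Filter.Eventually.of_forall hpos)),
    ← integral_Ioc_eq_integral_Ioo, ← intervalIntegral.integral_of_le hab,
    intervalIntegral.integral_eq_sub_of_hasDerivAt (fun x _ ↦ hf x) (hf'.intervalIntegrable a b)]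

theorem ENNReal.rpow_half_le_ofReal_mul_rpow_half {A B : ENNReal} {a b : ℝ}
    (hAB : A ≤ ENNReal.ofReal a * B) (hab : a ≤ b ^ 2) (hb : 0 ≤ b) :
    A ^ (1 / 2 : ℝ) ≤ ENNReal.ofReal b * B ^ (1 / 2 : ℝ) := by
  have hsq : ENNReal.ofReal a ≤ ENNReal.ofReal b ^ (2 : ℝ) := by
    rw [ENNReal.rpow_two, ← ENNReal.ofReal_pow hb]; exact ENNReal.ofReal_le_ofReal hab
  calc A ^ (1 / 2 : ℝ) ≤ (ENNReal.ofReal b ^ (2 : ℝ) * B) ^ (1 / 2 : ℝ) :=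
        ENNReal.rpow_le_rpow (hAB.trans (mul_le_mul_left hsq B)) (by norm_num)
    _ = ENNReal.ofReal b * B ^ (1 / 2 : ℝ) := by
        rw [ENNReal.mul_rpow_of_nonneg _ _ (by norm_num), ← ENNReal.rpow_mul]; norm_num

section Multipliers

variable {d : ℕ} (h : ℝ) (ξ : Fin d → ℤ) (z : ℝ)

lemma liftP_eq_cosh_div_cosh :
    liftP h ξ z = cosh ((z + h) * latNorm ξ) / cosh (h * latNorm ξ) := by
  have hnum : exp (z * latNorm ξ) + exp (-(2 * h + z) * latNorm ξ) =
      exp (-(h * latNorm ξ)) * (exp ((z + h) * latNorm ξ) + exp (-((z + h) * latNorm ξ))) := by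
    rw [mul_add, ← exp_add, ← exp_add]; ring_nf
  rw [liftP, hnum, mul_assoc, one_add_exp_neg_two_mul, mul_div_mul_left _ _ (exp_pos _).ne',
    cosh_eq, cosh_eq, div_div_div_cancel_right₀ two_ne_zero]

lemma liftQ_eq_sinh_div_cosh :
    liftQ h ξ z = sinh ((z + h) * latNorm ξ) / cosh (h * latNorm ξ) := by
  have hnum : exp (z * latNorm ξ) - exp (-(2 * h + z) * latNorm ξ) =
      exp (-(h * latNorm ξ)) * (exp ((z + h) * latNorm ξ) - exp (-((z + h) * latNorm ξ))) := by
    rw [mul_sub, ← exp_add, ← exp_add]; ring_nf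
  rw [liftQ, hnum, mul_assoc, one_add_exp_neg_two_mul, mul_div_mul_left _ _ (exp_pos _).ne',
    sinh_eq, cosh_eq, div_div_div_cancel_right₀ two_ne_zero]

lemma hasDerivAt_liftP : HasDerivAt (liftP h ξ) (latNorm ξ * liftQ h ξ z) z := by
  have := ((((hasDerivAt_id z).add_const h).mul_const (latNorm ξ)).cosh).div_const
    (cosh (h * latNorm ξ))
  rw [funext (liftP_eq_cosh_div_cosh h ξ), liftQ_eq_sinh_div_cosh]
  refine this.congr_deriv ?_
  simp only [id, one_mul]
  ring

lemma hasDerivAt_liftQ : HasDerivAt (liftQ h ξ) (latNorm ξ * liftP h ξ z) z := by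
  have := ((((hasDerivAt_id z).add_const h).mul_const (latNorm ξ)).sinh).div_const
    (cosh (h * latNorm ξ))
  rw [funext (liftQ_eq_sinh_div_cosh h ξ), liftP_eq_cosh_div_cosh]
  refine this.congr_deriv ?_
  simp only [id, one_mul]
  ring

lemma hasDerivAt_latNorm_mul_liftP_mul_liftQ :
    HasDerivAt (fun z ↦ latNorm ξ * (liftP h ξ z * liftQ h ξ z))
      (latNorm ξ ^ 2 * (liftP h ξ z ^ 2 + liftQ h ξ z ^ 2)) z := by
  refine (((hasDerivAt_liftP h ξ z).mul (hasDerivAt_liftQ h ξ z)).const_mul _).congr_deriv ?_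
  ring

@[fun_prop]
lemma continuous_liftP : Continuous (liftP h ξ) :=
  continuous_iff_continuousAt.2 fun z ↦ (hasDerivAt_liftP h ξ z).continuousAt

@[fun_prop]
lemma continuous_liftQ : Continuous (liftQ h ξ) :=
  continuous_iff_continuousAt.2 fun z ↦ (hasDerivAt_liftQ h ξ z).continuousAt

lemma liftP_zero : liftP h ξ 0 = 1 := by
  rw [liftP_eq_cosh_div_cosh, zero_add, div_self (cosh_pos _).ne']

lemma liftQ_zero : liftQ h ξ 0 = tanh (h * latNorm ξ) := by
  rw [liftQ_eq_sinh_div_cosh, zero_add, tanh_eq_sinh_div_cosh]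

lemma liftQ_neg_self : liftQ h ξ (-h) = 0 := by
  rw [liftQ_eq_sinh_div_cosh, neg_add_cancel, zero_mul, sinh_zero, zero_div]

lemma latNorm_nonneg : 0 ≤ latNorm ξ := sqrt_nonneg _

lemma liftP_sq_add_liftQ_sq_le_two (hz : z ∈ Icc (-h) 0) :
    liftP h ξ z ^ 2 + liftQ h ξ z ^ 2 ≤ 2 := by
  have hcosh : cosh ((z + h) * latNorm ξ) ≤ cosh (h * latNorm ξ) := by
    rw [cosh_le_cosh, abs_of_nonneg (by nlinarith [hz.1, latNorm_nonneg ξ]),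
      abs_of_nonneg (by nlinarith [hz.1, hz.2, latNorm_nonneg ξ])]
    nlinarith [hz.2, latNorm_nonneg ξ]
  have hP : liftP h ξ z ^ 2 ≤ 1 := by
    rw [liftP_eq_cosh_div_cosh, div_pow, div_le_one (by positivity)]
    exact pow_le_pow_left₀ (cosh_pos _).le hcosh 2
  have hQP : liftQ h ξ z ^ 2 ≤ liftP h ξ z ^ 2 := by
    rw [liftP_eq_cosh_div_cosh, liftQ_eq_sinh_div_cosh, div_pow, div_pow,
      cosh_sq ((z + h) * latNorm ξ)]
    exact div_le_div_of_nonneg_right (by linarith) (by positivity)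
  linarith

lemma lintegral_latNorm_sq_mul_liftP_sq_add_liftQ_sq (hh : 0 ≤ h) :
    ∫⁻ z in Ioo (-h) 0, ENNReal.ofReal (latNorm ξ ^ 2 * (liftP h ξ z ^ 2 + liftQ h ξ z ^ 2)) =
      ENNReal.ofReal (latNorm ξ * tanh (h * latNorm ξ)) := by
  rw [setLIntegral_Ioo_ofReal_eq_sub_of_hasDerivAt (by linarith)
    (hasDerivAt_latNorm_mul_liftP_mul_liftQ h ξ) (by fun_prop) (fun _ _ ↦ by positivity),
    liftP_zero, liftQ_zero, liftQ_neg_self]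
  congr 1
  ring

lemma latJap_eq_sqrt : latJap ξ = sqrt (1 + latNorm ξ ^ 2) := by
  rw [latJap, latNorm, sq_sqrt (Finset.sum_nonneg fun i _ ↦ sq_nonneg _)]

lemma latJap_pos : 0 < latJap ξ := by
  rw [latJap_eq_sqrt]; positivity

lemma latNorm_sq_mul_liftP_sq_add_liftQ_sq_le (hh : 0 < h) (hz : z ∈ Icc (-h) 0) :
    latNorm ξ ^ 2 * (liftP h ξ z ^ 2 + liftQ h ξ z ^ 2) ≤
      2 * (1 + 2 * h) / h * latJap ξ * (latNorm ξ * tanh (h * latNorm ξ)) := by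
  set r := latNorm ξ
  have hr : 0 ≤ r := latNorm_nonneg ξ
  have hJ1 : 1 ≤ latJap ξ := by
    rw [latJap_eq_sqrt, one_le_sqrt]; nlinarith
  have hJr : r ≤ latJap ξ := by
    rw [latJap_eq_sqrt]; exact le_sqrt_of_sq_le (by linarith)
  have hT := le_one_add_two_mul_mul_tanh (mul_nonneg hh.le hr)
  have hT0 := tanh_nonneg (mul_nonneg hh.le hr)
  have hPQ := liftP_sq_add_liftQ_sq_le_two h ξ z hz
  rw [div_mul_eq_mul_div, div_mul_eq_mul_div, le_div_iff₀ hh]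
  calc r ^ 2 * (liftP h ξ z ^ 2 + liftQ h ξ z ^ 2) * h ≤ 2 * r * (h * r) := by
        nlinarith [mul_le_mul_of_nonneg_left hPQ (by positivity : 0 ≤ r ^ 2 * h)]
    _ ≤ 2 * r * ((1 + 2 * (h * r)) * tanh (h * r)) := by gcongr
    _ ≤ 2 * r * ((1 + 2 * h) * latJap ξ * tanh (h * r)) := by gcongr; nlinarith
    _ = 2 * (1 + 2 * h) * latJap ξ * (r * tanh (h * r)) := by ring

end Multipliers

section Norms

variable {d : ℕ} {h : ℝ} (σ μ : ℝ) (c : (Fin d → ℤ) → ℂ)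

lemma hWeight_ne_top (ξ : Fin d → ℤ) : hWeight σ μ ξ ≠ ⊤ := ENNReal.ofReal_ne_top

lemma hWeight_sub_half_mul_latJap (ξ : Fin d → ℤ) :
    hWeight σ (μ - 1 / 2) ξ * ENNReal.ofReal (latJap ξ) = hWeight σ μ ξ := by
  rw [hWeight, hWeight,
    ← ENNReal.ofReal_mul (mul_nonneg (exp_pos _).le (rpow_nonneg (latJap_pos ξ).le _)), mul_assoc,
    ← rpow_add_one (latJap_pos ξ).ne']
  ring_nf

lemma hNormSq_aHalf (hh : 0 ≤ h) :
    hNormSq σ μ (aHalf h c) = ∑' ξ, hWeight σ μ ξ *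
      ENNReal.ofReal (latNorm ξ * tanh (h * latNorm ξ)) * (‖c ξ‖₊ : ℝ≥0∞) ^ 2 := by
  refine tsum_congr fun ξ ↦ ?_
  have ha : 0 ≤ latNorm ξ * tanh (h * latNorm ξ) :=
    mul_nonneg (latNorm_nonneg ξ) (tanh_nonneg (mul_nonneg hh (latNorm_nonneg ξ)))
  rw [aHalf, nnnorm_mul, ENNReal.coe_mul, mul_pow, Complex.nnnorm_real, ← enorm_eq_nnnorm,
    Real.enorm_eq_ofReal (sqrt_nonneg _), ← ENNReal.ofReal_pow (sqrt_nonneg _), sq_sqrt ha,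
    mul_assoc]

lemma lintegral_liftGradSq (hh : 0 ≤ h) :
    ∫⁻ z in Ioo (-h) 0, liftGradSq h σ μ c z = hNormSq σ μ (aHalf h c) := by
  unfold liftGradSq
  rw [hNormSq_aHalf σ μ c hh, lintegral_tsum fun ξ ↦ by fun_prop]
  refine tsum_congr fun ξ ↦ ?_
  rw [lintegral_mul_const' _ _ (by simp), lintegral_const_mul' _ _ (hWeight_ne_top σ μ ξ),
    lintegral_latNorm_sq_mul_liftP_sq_add_liftQ_sq h ξ hh]

lemma liftGradSq_sub_half_le (hh : 0 < h) {z : ℝ} (hz : z ∈ Icc (-h) 0) :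
    liftGradSq h σ (μ - 1 / 2) c z ≤
      ENNReal.ofReal (2 * (1 + 2 * h) / h) * hNormSq σ μ (aHalf h c) := by
  set K := 2 * (1 + 2 * h) / h
  have hK : 0 ≤ K := by positivity
  rw [hNormSq_aHalf σ μ c hh.le, ← ENNReal.tsum_mul_left]
  refine ENNReal.tsum_le_tsum fun ξ ↦ ?_
  rw [← mul_assoc, ← mul_assoc]
  gcongr ?_ * _
  calc hWeight σ (μ - 1 / 2) ξ *
        ENNReal.ofReal (latNorm ξ ^ 2 * (liftP h ξ z ^ 2 + liftQ h ξ z ^ 2))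
      ≤ hWeight σ (μ - 1 / 2) ξ *
          ENNReal.ofReal (K * latJap ξ * (latNorm ξ * tanh (h * latNorm ξ))) :=
        mul_le_mul_right (ENNReal.ofReal_le_ofReal
          (latNorm_sq_mul_liftP_sq_add_liftQ_sq_le h ξ z hh hz)) _
    _ = ENNReal.ofReal K * (hWeight σ (μ - 1 / 2) ξ * ENNReal.ofReal (latJap ξ)) *
          ENNReal.ofReal (latNorm ξ * tanh (h * latNorm ξ)) := by
        rw [ENNReal.ofReal_mul (mul_nonneg hK (latJap_pos ξ).le), ENNReal.ofReal_mul hK]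
        ring
    _ = ENNReal.ofReal K * hWeight σ μ ξ *
          ENNReal.ofReal (latNorm ξ * tanh (h * latNorm ξ)) := by
        rw [hWeight_sub_half_mul_latJap]

end Norms

/-- harmonic lifting estimates. The solution `ψ̲` of
`∂_z²ψ̲ + Δ_xψ̲ = 0`, `ψ̲|_{z=0} = ψ`, `∂_zψ̲|_{z=-h} = 0` (given by the
explicit multipliers `liftP`, `liftQ`) satisfies
`‖∇_{x,z}ψ̲‖_{L²((-h,0),H^{σ,μ})} ≤ C‖a(D)^{1/2}ψ‖_{H^{σ,μ}}` and
`‖∇_{x,z}ψ̲‖_{L^∞((-h,0),H^{σ,μ-1/2})} ≤ C‖a(D)^{1/2}ψ‖_{H^{σ,μ}}`. -/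
theorem statement16 (d : ℕ) (h μ : ℝ) (hh : 0 < h) :
    ∃ C : ℝ, 0 < C ∧ ∀ σ : ℝ, 0 ≤ σ → ∀ c : (Fin d → ℤ) → ℂ,
      hNormSq σ μ (aHalf h c) ≠ ⊤ →
      ((∫⁻ z in Set.Ioo (-h) (0 : ℝ), liftGradSq h σ μ c z) ^ (1/2 : ℝ)
          ≤ ENNReal.ofReal C * hNorm σ μ (aHalf h c)) ∧
      (∀ z ∈ Set.Ioo (-h) (0 : ℝ),
          (liftGradSq h σ (μ - 1/2) c z) ^ (1/2 : ℝ)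
            ≤ ENNReal.ofReal C * hNorm σ μ (aHalf h c)) := by
  set K := 2 * (1 + 2 * h) / h
  have hK : 0 ≤ K := by positivity
  refine ⟨K + 1, by positivity, fun σ _ c _ ↦ ⟨?_, fun z hz ↦ ?_⟩⟩
  · refine ENNReal.rpow_half_le_ofReal_mul_rpow_half (a := 1) ?_ (by nlinarith) (by positivity)
    rw [lintegral_liftGradSq σ μ c hh.le, ENNReal.ofReal_one, one_mul]
  · exact ENNReal.rpow_half_le_ofReal_mul_rpow_half
      (liftGradSq_sub_half_le σ μ c hh (Ioo_subset_Icc_self hz)) (by nlinarith) (by positivity)
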